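/- Fix n ∈ ℕ and let c = (n+2)/2. Let V and Ṽ be independent, each uniformly distributed on 𝓘_{n+1} = {1, …, n+1}, and define the contour of the two-sided nested random set S = { v ∈ 𝓘_{n+1} : |v − c| ≤ |Ṽ − c| } by γ(v) = ℙ( |Ṽ − c| ≥ |v − c| ) = (n+1)^{-1} #{ ṽ ∈ 𝓘_{n+1} : |ṽ − c| ≥ |v − c| }. Then S is valid: for every α ∈ [0,1], ℙ( γ(V) ≤ k_n(α) ) ≤ α, where k_n(α) = ⌊(n+1)α⌋/(n+1). (Validity of the two-sided 'default' random set used for equal-tailed nonparametric prediction intervals.) -/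

import Mathlib

open MeasureTheory Finset

-- The element of the filtered set with the smallest score lies below all the others, so the
-- whole filtered set is contained in its upper set, which has at most `m` elements.
theorem Finset.card_filter_card_filter_le_le {α β : Type*} [LinearOrder β] (s : Finset α)
    (g : α → β) (m : ℕ) : #{v ∈ s | #{w ∈ s | g v ≤ g w} ≤ m} ≤ m := by
  classical
  set A := {v ∈ s | #{w ∈ s | g v ≤ g w} ≤ m}
  rcases A.eq_empty_or_nonempty with hA | hA
  · simp [hA]
  obtain ⟨v₀, hv₀, hmin⟩ := A.exists_min_image g hA
  calc #A ≤ #{w ∈ s | g v₀ ≤ g w} :=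
        card_le_card fun w hw => mem_filter.mpr ⟨(mem_filter.mp hw).1, hmin w hw⟩
    _ ≤ m := (mem_filter.mp hv₀).2

theorem PMF.toMeasure_uniformOfFinset_card_filter_le_le {α β : Type*} [MeasurableSpace α]
    [DiscreteMeasurableSpace α] [LinearOrder β] (s : Finset α) (hs : s.Nonempty) (g : α → β)
    (m : ℕ) :
    (uniformOfFinset s hs).toMeasure {v | #{w ∈ s | g v ≤ g w} ≤ m} ≤ m / #s := by
  classical
  rw [toMeasure_uniformOfFinset_apply _ _ .of_discrete]
  simp only [Set.mem_ofPred_eq]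
  gcongr
  exact_mod_cast s.card_filter_card_filter_le_le g m

/-- **Validity of the two-sided 'default' random set.** Let `c = (n+2)/2` be the midpoint
of `𝓘_{n+1} = {1,…,n+1}`, let `V` be uniform on `𝓘_{n+1}`, and let
`γ(v) = (n+1)⁻¹ #{ṽ ∈ 𝓘_{n+1} : |ṽ - c| ≥ |v - c|}` be the contour of the two-sided
nested random set `S = {v : |v - c| ≤ |Ṽ - c|}`, `Ṽ ~ Unif(𝓘_{n+1})`.  Then for every
`α ∈ [0,1]`, `P(γ(V) ≤ k_n(α)) ≤ α`, where `k_n(α) = ⌊(n+1)α⌋/(n+1)`. -/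
theorem stmt16 (n : ℕ) (α : ℝ) (hα : α ∈ Set.Icc (0:ℝ) 1) :
    (PMF.uniformOfFinset (Finset.Icc 1 (n+1))
        (Finset.nonempty_Icc.mpr (by omega))).toMeasure
      {v : ℕ | (((Finset.Icc 1 (n+1)).filter fun vt : ℕ =>
            |(v:ℝ) - ((n:ℝ)+2)/2| ≤ |(vt:ℝ) - ((n:ℝ)+2)/2|).card : ℝ) / ((n:ℝ)+1)
          ≤ (⌊((n:ℝ)+1)*α⌋ : ℝ)/((n:ℝ)+1)}
      ≤ ENNReal.ofReal α := by
  have hN : (0 : ℝ) < n + 1 := by positivity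
  have hNα : 0 ≤ ((n : ℝ) + 1) * α := mul_nonneg hN.le hα.1
  set m := ⌊((n : ℝ) + 1) * α⌋₊
  refine ((measure_mono fun v hv => ?_).trans (PMF.toMeasure_uniformOfFinset_card_filter_le_le _ _
    (fun v : ℕ => |(v : ℝ) - ((n : ℝ) + 2) / 2|) m)).trans ?_
  · rwa [Set.mem_ofPred_eq, div_le_div_iff_of_pos_right hN,
      ← natCast_floor_eq_intCast_floor hNα, Nat.cast_le] at hv
  rw [Nat.card_Icc, Nat.add_sub_cancel]
  refine ENNReal.div_le_of_le_mul ?_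
  rw [← ENNReal.ofReal_natCast m, ← ENNReal.ofReal_natCast (n + 1), ← ENNReal.ofReal_mul hα.1]
  refine ENNReal.ofReal_le_ofReal ?_
  push_cast
  linarith [Nat.floor_le hNα]
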